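/- arXiv:1905.04030 — 18 statements merged into one kernel-verified Lean document; each statement's English description precedes it below -/
import Mathlib

section
/- Let S be an ordered semigroup and e, f ∈ S with e ≤ e², f ≤ f². If e and f generate the same principal left ideal (i.e., (Se] = (Sf]) and x ∈ S satisfies e ≤ xf, then the element exf is an ordered idempotent, i.e., exf ≤ (exf)². -/
variable {S : Type*} [Semigroup S] [PartialOrder S]
  [CovariantClass S S (· * ·) (· ≤ ·)]
  [CovariantClass S S (Function.swap (· * ·)) (· ≤ ·)]

/-- Principal left ideal (S¹a] of an ordered semigroup. -/
def leftIdeal (a : S) : Set S := {t | t ≤ a ∨ ∃ x, t ≤ x * a}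

/-- Principal right ideal (aS¹]. -/
def rightIdeal (a : S) : Set S := {t | t ≤ a ∨ ∃ x, t ≤ a * x}

/-- Principal two-sided ideal (S¹aS¹]. -/
def twoIdeal (a : S) : Set S :=
  {t | t ≤ a ∨ (∃ x, t ≤ x * a) ∨ (∃ y, t ≤ a * y) ∨ (∃ x y, t ≤ x * a * y)}

def GreenL (a b : S) : Prop := leftIdeal a = leftIdeal b
def GreenR (a b : S) : Prop := rightIdeal a = rightIdeal b
def GreenH (a b : S) : Prop := GreenL a b ∧ GreenR a b
def GreenJ (a b : S) : Prop := twoIdeal a = twoIdeal b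

/-- b is an (ordered) inverse of a. -/
def OrdInv (a b : S) : Prop := a ≤ a * b * a ∧ b ≤ b * a * b

theorem stmt0 (e f x : S) (he : e ≤ e * e) (hf : f ≤ f * f)
    (hLf : leftIdeal e = leftIdeal f) (hx : e ≤ x * f) :
    e * x * f ≤ (e * x * f) * (e * x * f) := by
  have h1 : e ≤ e * x * f := by
    refine he.trans ?_
    rw [mul_assoc]
    exact mul_le_mul_right hx e
  have h2 : e ≤ e * x * f * e := he.trans (mul_le_mul_left h1 e)
  calc e * x * f ≤ (e * x * f * e) * x * f := by
        exact mul_le_mul_left (mul_le_mul_left h2 x) f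
    _ = (e * x * f) * (e * x * f) := by simp [mul_assoc]
end

section
/- Let S be an ordered semigroup, e, f ordered idempotents (e ≤ e², f ≤ f²), and x ∈ S with e ≤ xf, y ∈ S with f ≤ ye. Then fe is an inverse of exf, i.e., exf ≤ (exf)(fe)(exf) and fe ≤ (fe)(exf)(fe). -/
variable {S : Type*} [Semigroup S] [PartialOrder S]
  [CovariantClass S S (· * ·) (· ≤ ·)]
  [CovariantClass S S (Function.swap (· * ·)) (· ≤ ·)]

theorem stmt1 (e f x y : S) (he : e ≤ e * e) (hf : f ≤ f * f)
    (hx : e ≤ x * f) (hy : f ≤ y * e) :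
    OrdInv (e * x * f) (f * e) := by
  have k1 : e ≤ e * x * f * f := by
    calc e ≤ e * e := he
      _ ≤ e * (x * f) := mul_le_mul_right hx e
      _ = e * x * f := (mul_assoc _ _ _).symm
      _ ≤ e * x * (f * f) := mul_le_mul_right hf _
      _ = e * x * f * f := (mul_assoc _ _ _).symm
  constructor
  · have k2 : e ≤ e * x * f * f * e * e := by
      calc e ≤ e * e := he
        _ ≤ (e * x * f * f) * (e * e) := mul_le_mul' k1 he
        _ = e * x * f * f * e * e := by simp [mul_assoc]
    calc e * x * f ≤ (e * x * f * f * e * e) * x * f :=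
          mul_le_mul_left (mul_le_mul_left k2 x) f
      _ = e * x * f * (f * e) * (e * x * f) := by simp [mul_assoc]
  · have k3 : e ≤ e * (e * x * f * f) * e := by
      calc e ≤ e * e := he
        _ ≤ (e * (e * x * f * f)) * e :=
          mul_le_mul_left (le_trans he (mul_le_mul_right k1 e)) e
    calc f * e ≤ f * (e * (e * x * f * f) * e) := mul_le_mul_right k3 f
      _ = f * e * (e * x * f) * (f * e) := by simp [mul_assoc]
end

section
/- Let S be a regular ordered semigroup in which any two inverses of any element are H-related (inverse ordered semigroup). Then every principal left ideal of S is generated by an H-unique ordered idempotent: if e, f are ordered idempotents with (Se] = (Sf], then e H f. -/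
variable {S : Type*} [Semigroup S] [PartialOrder S]
  [CovariantClass S S (· * ·) (· ≤ ·)]
  [CovariantClass S S (Function.swap (· * ·)) (· ≤ ·)]

theorem stmt2
    (hreg : ∀ a : S, ∃ x, a ≤ a * x * a)
    (hinv : ∀ a b c : S, OrdInv a b → OrdInv a c → GreenH b c)
    (e f : S) (he : e ≤ e * e) (hf : f ≤ f * f)
    (hLf : leftIdeal e = leftIdeal f) :
    GreenH e f := by
  -- extract y with e ≤ y * f
  have hef : e ∈ leftIdeal f := by
    rw [← hLf]; exact Or.inl le_rfl
  have hfe : f ∈ leftIdeal e := by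
    rw [hLf]; exact Or.inl le_rfl
  obtain ⟨y, hy⟩ : ∃ y, e ≤ y * f := by
    rcases hef with h | ⟨y, hy⟩
    · exact ⟨e, he.trans (mul_le_mul_right h e)⟩
    · exact ⟨y, hy⟩
  obtain ⟨x, hx⟩ : ∃ x, f ≤ x * e := by
    rcases hfe with h | ⟨x, hx⟩
    · exact ⟨f, hf.trans (mul_le_mul_right h f)⟩
    · exact ⟨x, hx⟩
  -- basic consequences
  have heyf : e ≤ e * (y * f) := he.trans (mul_le_mul_right hy e)
  have hfxe : f ≤ f * (x * e) := hf.trans (mul_le_mul_right hx f)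
  -- e is an ordered inverse of e
  have hee : OrdInv e e := by
    constructor <;> exact he.trans (mul_le_mul' he le_rfl)
  -- e*y*f is an ordered inverse of e
  have t1 : e ≤ e * (e * y * f) * e := by
    calc e ≤ e * e := he
      _ ≤ (e * e) * (e * e) := mul_le_mul' he he
      _ ≤ (e * e) * ((y * f) * e) := mul_le_mul_right (mul_le_mul_left hy e) (e * e)
      _ = e * (e * y * f) * e := by simp only [mul_assoc]
  have t2 : e * y * f ≤ (e * y * f) * e * (e * y * f) := by
    calc e * y * f = e * (y * f) := by rw [mul_assoc]
      _ ≤ ((e * (y * f)) * (e * e)) * (y * f) :=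
          mul_le_mul_left (he.trans (mul_le_mul' heyf he)) (y * f)
      _ = (e * y * f) * e * (e * y * f) := by simp only [mul_assoc]
  have H1 : GreenH e (e * y * f) := hinv e e (e * y * f) hee ⟨t1, t2⟩
  -- e*y*f and f are both ordered inverses of f*x*e
  have hE7 : e ≤ y * (f * (f * (x * e))) :=
    hy.trans (mul_le_mul_right (hf.trans (mul_le_mul_right hfxe f)) y)
  have hE8 : e ≤ e * (e * (y * (f * (f * (x * e))))) :=
    he.trans ((mul_le_mul_right he e).trans
      (mul_le_mul_right (mul_le_mul_right hE7 e) e))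
  have t3 : f * x * e ≤ (f * x * e) * (e * y * f) * (f * x * e) := by
    calc f * x * e = (f * x) * e := rfl
      _ ≤ (f * x) * (e * (e * (y * (f * (f * (x * e)))))) := mul_le_mul_right hE8 (f * x)
      _ = (f * x * e) * (e * y * f) * (f * x * e) := by simp only [mul_assoc]
  have hE3 : e ≤ e * (e * (y * f)) :=
    he.trans (mul_le_mul_right heyf e)
  have hF6 : f ≤ f * (f * (x * (e * (e * (y * f))))) :=
    hf.trans (mul_le_mul_right (hfxe.trans
      (mul_le_mul_right (mul_le_mul_right hE3 x) f)) f)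
  have t4 : e * y * f ≤ (e * y * f) * (f * x * e) * (e * y * f) := by
    calc e * y * f = (e * y) * f := rfl
      _ ≤ (e * y) * (f * (f * (x * (e * (e * (y * f)))))) := mul_le_mul_right hF6 (e * y)
      _ = (e * y * f) * (f * x * e) * (e * y * f) := by simp only [mul_assoc]
  have hF : f ≤ (f * (x * e)) * (f * f) :=
    hf.trans ((mul_le_mul' hf hf).trans
      (mul_le_mul_left (mul_le_mul_right hx f) (f * f)))
  have t5 : f * x * e ≤ (f * x * e) * f * (f * x * e) := by
    calc f * x * e = f * (x * e) := by rw [mul_assoc]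
      _ ≤ ((f * (x * e)) * (f * f)) * (x * e) := mul_le_mul_left hF (x * e)
      _ = (f * x * e) * f * (f * x * e) := by simp only [mul_assoc]
  have t6 : f ≤ f * (f * x * e) * f := by
    calc f ≤ f * f := hf
      _ ≤ (f * f) * (f * f) := mul_le_mul' hf hf
      _ ≤ (f * f) * ((x * e) * f) := mul_le_mul_right (mul_le_mul_left hx f) (f * f)
      _ = f * (f * x * e) * f := by simp only [mul_assoc]
  have H2 : GreenH (e * y * f) f := hinv (f * x * e) (e * y * f) f ⟨t3, t4⟩ ⟨t5, t6⟩
  exact ⟨H1.1.trans H2.1, H1.2.trans H2.2⟩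
end

section
/- Let S be an ordered semigroup in which every principal left ideal and every principal right ideal is generated by an H-unique ordered idempotent (any two ordered idempotents generating the same principal one-sided ideal are H-related), and S is regular. Then S is inverse: any two inverses of any element are H-related. -/
variable {S : Type*} [Semigroup S] [PartialOrder S]
  [CovariantClass S S (· * ·) (· ≤ ·)]
  [CovariantClass S S (Function.swap (· * ·)) (· ≤ ·)]

lemma lId_sub {t y : S} (h : t ∈ leftIdeal y) : leftIdeal t ⊆ leftIdeal y := by
  rintro s (hs | ⟨u, hu⟩)
  · rcases h with h | ⟨x, hx⟩
    · exact Or.inl (hs.trans h)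
    · exact Or.inr ⟨x, hs.trans hx⟩
  · rcases h with h | ⟨x, hx⟩
    · exact Or.inr ⟨u, hu.trans (mul_le_mul_right h u)⟩
    · exact Or.inr ⟨u * x, hu.trans ((mul_le_mul_right hx u).trans (mul_assoc u x y).ge)⟩

lemma rId_sub {t y : S} (h : t ∈ rightIdeal y) : rightIdeal t ⊆ rightIdeal y := by
  rintro s (hs | ⟨u, hu⟩)
  · rcases h with h | ⟨x, hx⟩
    · exact Or.inl (hs.trans h)
    · exact Or.inr ⟨x, hs.trans hx⟩
  · rcases h with h | ⟨x, hx⟩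
    · exact Or.inr ⟨u, hu.trans (mul_le_mul_left h u)⟩
    · exact Or.inr ⟨x * u, hu.trans ((mul_le_mul_left hx u).trans (mul_assoc y x u).le)⟩

lemma lId_eq {t y : S} (h1 : t ∈ leftIdeal y) (h2 : y ∈ leftIdeal t) :
    leftIdeal t = leftIdeal y := le_antisymm (lId_sub h1) (lId_sub h2)

lemma rId_eq {t y : S} (h1 : t ∈ rightIdeal y) (h2 : y ∈ rightIdeal t) :
    rightIdeal t = rightIdeal y := le_antisymm (rId_sub h1) (rId_sub h2)

theorem stmt3
    (hreg : ∀ a : S, ∃ x, a ≤ a * x * a)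
    (hL : ∀ e f : S, e ≤ e * e → f ≤ f * f → leftIdeal e = leftIdeal f → GreenH e f)
    (hR : ∀ e f : S, e ≤ e * e → f ≤ f * f → rightIdeal e = rightIdeal f → GreenH e f) :
    ∀ a b c : S, OrdInv a b → OrdInv a c → GreenH b c := by
  intro a b c hb hc
  obtain ⟨hab, hbab⟩ := hb
  obtain ⟨hac, hcac⟩ := hc
  -- ab and ac are ordered idempotents
  have eab : a * b ≤ (a * b) * (a * b) := by
    calc a * b ≤ (a * b * a) * b := mul_le_mul_left hab b
    _ = (a * b) * (a * b) := by simp [mul_assoc]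
  have eac : a * c ≤ (a * c) * (a * c) := by
    calc a * c ≤ (a * c * a) * c := mul_le_mul_left hac c
    _ = (a * c) * (a * c) := by simp [mul_assoc]
  have eba : b * a ≤ (b * a) * (b * a) := by
    calc b * a ≤ b * (a * b * a) := mul_le_mul_right hab b
    _ = (b * a) * (b * a) := by simp [mul_assoc]
  have eca : c * a ≤ (c * a) * (c * a) := by
    calc c * a ≤ c * (a * c * a) := mul_le_mul_right hac c
    _ = (c * a) * (c * a) := by simp [mul_assoc]
  -- ab R a R ac
  have rab : rightIdeal (a * b) = rightIdeal a :=
    rId_eq (Or.inr ⟨b, le_rfl⟩) (Or.inr ⟨a, hab⟩)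
  have rac : rightIdeal (a * c) = rightIdeal a :=
    rId_eq (Or.inr ⟨c, le_rfl⟩) (Or.inr ⟨a, hac⟩)
  -- ba L a L ca
  have lba : leftIdeal (b * a) = leftIdeal a :=
    lId_eq (Or.inr ⟨b, le_rfl⟩) (Or.inr ⟨a, by simpa [mul_assoc] using hab⟩)
  have lca : leftIdeal (c * a) = leftIdeal a :=
    lId_eq (Or.inr ⟨c, le_rfl⟩) (Or.inr ⟨a, by simpa [mul_assoc] using hac⟩)
  -- hence ab H ac and ba H ca
  have Hab : GreenH (a * b) (a * c) := hR _ _ eab eac (rab.trans rac.symm)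
  have Hba : GreenH (b * a) (c * a) := hL _ _ eba eca (lba.trans lca.symm)
  -- b L ab, c L ac
  have lb : leftIdeal b = leftIdeal (a * b) :=
    lId_eq (Or.inr ⟨b, by simpa [mul_assoc] using hbab⟩) (Or.inr ⟨a, le_rfl⟩)
  have lc : leftIdeal c = leftIdeal (a * c) :=
    lId_eq (Or.inr ⟨c, by simpa [mul_assoc] using hcac⟩) (Or.inr ⟨a, le_rfl⟩)
  -- b R ba, c R ca
  have rb : rightIdeal b = rightIdeal (b * a) :=
    rId_eq (Or.inr ⟨b, by simpa [mul_assoc] using hbab⟩) (Or.inr ⟨a, le_rfl⟩)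
  have rc : rightIdeal c = rightIdeal (c * a) :=
    rId_eq (Or.inr ⟨c, by simpa [mul_assoc] using hcac⟩) (Or.inr ⟨a, le_rfl⟩)
  exact ⟨lb.trans (Hab.1.trans lc.symm), rb.trans (Hba.2.trans rc.symm)⟩
end

section
/- Let S be an inverse ordered semigroup (regular, with any two inverses of each element H-related). Then any two ordered idempotents e, f of S are H-commutative: there exist y, z ∈ S with ef ≤ fye and fe ≤ ezf. -/
variable {S : Type*} [Semigroup S] [PartialOrder S]
  [CovariantClass S S (· * ·) (· ≤ ·)]
  [CovariantClass S S (Function.swap (· * ·)) (· ≤ ·)]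

private lemma key
    (hreg : ∀ a : S, ∃ x, a ≤ a * x * a)
    (hinv : ∀ a b c : S, OrdInv a b → OrdInv a c → GreenH b c)
    (e f : S) (he : e ≤ e * e) (hf : f ≤ f * f) :
    ∃ y, e * f ≤ f * y * e := by
  obtain ⟨x, hx⟩ := hreg (e * f)
  set a := e * f with ha
  set b := x * a * x with hb
  -- a ≤ a b a
  have hab : a ≤ a * b * a := by
    calc a ≤ a * x * a := hx
      _ ≤ a * x * (a * x * a) := mul_le_mul_right hx (a * x)
      _ = a * b * a := by simp only [hb, mul_assoc]
  -- b ≤ b a b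
  have hba : b ≤ b * a * b := by
    calc b = x * a * x := hb
      _ ≤ x * (a * b * a) * x :=
        mul_le_mul_left (mul_le_mul_right hab x) x
      _ = b * a * b := by simp only [hb, mul_assoc]
  have hEF : a ≤ (e * e) * (f * f) := by
    calc a = e * f := ha
      _ ≤ (e * e) * f := mul_le_mul_left he f
      _ ≤ (e * e) * (f * f) := mul_le_mul_right hf (e * e)
  set b' := f * b * e with hb'
  -- a ≤ a b' a
  have hab' : a ≤ a * b' * a := by
    calc a ≤ a * b * a := hab
      _ = e * (f * b * e) * f := by simp only [ha, mul_assoc]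
      _ ≤ e * (f * f * b * (e * e)) * f := by
          refine mul_le_mul_left (mul_le_mul_right ?_ e) f
          calc f * b * e ≤ f * f * b * e :=
                mul_le_mul_left (mul_le_mul_left hf b) e
            _ ≤ f * f * b * (e * e) := mul_le_mul_right he (f * f * b)
      _ = a * b' * a := by simp only [ha, hb', mul_assoc]
  -- b' ≤ b' b'
  have hb'2 : b' ≤ b' * b' := by
    calc b' = f * b * e := hb'
      _ ≤ f * (b * a * b) * e := mul_le_mul_left (mul_le_mul_right hba f) e
      _ = b' * b' := by simp only [hb', ha, mul_assoc]
  -- b' ≤ b' a b'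
  have hb'ab' : b' ≤ b' * a * b' := by
    calc b' = f * b * e := hb'
      _ ≤ f * (b * a * b) * e := mul_le_mul_left (mul_le_mul_right hba f) e
      _ ≤ f * (b * ((e * e) * (f * f)) * b) * e := by
          refine mul_le_mul_left (mul_le_mul_right ?_ f) e
          exact mul_le_mul_left (mul_le_mul_right hEF b) b
      _ = b' * a * b' := by simp only [hb', ha, mul_assoc]
  have hinvb'b' : OrdInv b' b' := by
    constructor <;>
    · calc b' ≤ b' * b' := hb'2
        _ ≤ b' * (b' * b') := mul_le_mul_right hb'2 b'
        _ = b' * b' * b' := (mul_assoc _ _ _).symm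
  have hinvb'a : OrdInv b' a := ⟨hb'ab', hab'⟩
  have hH : GreenH b' a := hinv b' b' a hinvb'b' hinvb'a
  -- a lies in the left and right ideals generated by b'
  have haL : a ∈ leftIdeal b' := by
    rw [hH.1]; exact Or.inl le_rfl
  have haR : a ∈ rightIdeal b' := by
    rw [hH.2]; exact Or.inl le_rfl
  have hfu : ∃ u, a ≤ f * u := by
    rcases haR with h | ⟨t, ht⟩
    · exact ⟨b * e, by calc a ≤ b' := h
        _ = f * (b * e) := by simp only [hb', mul_assoc]⟩
    · exact ⟨b * e * t, by calc a ≤ b' * t := ht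
        _ = f * (b * e * t) := by simp only [hb', mul_assoc]⟩
  have hve : ∃ v, a ≤ v * e := by
    rcases haL with h | ⟨s, hs⟩
    · exact ⟨f * b, h⟩
    · exact ⟨s * (f * b), by calc a ≤ s * b' := hs
        _ = s * (f * b) * e := by simp only [hb', mul_assoc]⟩
  obtain ⟨u, hu⟩ := hfu
  obtain ⟨v, hv⟩ := hve
  refine ⟨u * b' * v, ?_⟩
  calc e * f = a := ha.symm
    _ ≤ a * b' * a := hab'
    _ ≤ (f * u) * b' * (v * e) := mul_le_mul' (mul_le_mul' hu le_rfl) hv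
    _ = f * (u * b' * v) * e := by simp only [mul_assoc]

theorem stmt4
    (hreg : ∀ a : S, ∃ x, a ≤ a * x * a)
    (hinv : ∀ a b c : S, OrdInv a b → OrdInv a c → GreenH b c)
    (e f : S) (he : e ≤ e * e) (hf : f ≤ f * f) :
    (∃ y, e * f ≤ f * y * e) ∧ (∃ z, f * e ≤ e * z * f) :=
  ⟨key hreg hinv e f he hf, key hreg hinv f e hf he⟩
end

section
/- Let S be a regular ordered semigroup whose ordered idempotents are H-commutative (for all ordered idempotents e, f there exist x, y with ef ≤ fxe and fe ≤ eyf). Then for ordered idempotents e, f, if e L f then e H f. -/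
variable {S : Type*} [Semigroup S] [PartialOrder S]
  [CovariantClass S S (· * ·) (· ≤ ·)]
  [CovariantClass S S (Function.swap (· * ·)) (· ≤ ·)]

/-- Key lemma: if `e ≤ x*f` and `f ≤ y*e` for ordered idempotents `e,f`,
then `e` lies below `f * u` for some `u`. -/
lemma aux_le_mul
    (hreg : ∀ a : S, ∃ x, a ≤ a * x * a)
    (hcomm : ∀ e f : S, e ≤ e * e → f ≤ f * f →
      (∃ x, e * f ≤ f * x * e) ∧ (∃ y, f * e ≤ e * y * f))
    (e f : S) (he : e ≤ e * e) (hf : f ≤ f * f)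
    (x y : S) (ex : e ≤ x * f) (fy : f ≤ y * e) : ∃ u, e ≤ f * u := by
  obtain ⟨z, hz⟩ := hreg (f * e)
  -- hz : f*e ≤ f*e*z*(f*e)
  -- E := x*f*(y*e) is an ordered idempotent
  have h1 : e ≤ e * (x * f * (y * e)) := by
    calc e ≤ e * e := he
      _ ≤ e * (x * f) := mul_le_mul_right ex e
      _ ≤ e * (x * (f * f)) := mul_le_mul_right (mul_le_mul_right hf x) e
      _ ≤ e * (x * (f * (y * e))) :=
          mul_le_mul_right (mul_le_mul_right (mul_le_mul_right fy f) x) e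
      _ = e * (x * f * (y * e)) := by simp only [mul_assoc]
  have hE : x * f * (y * e) ≤ (x * f * (y * e)) * (x * f * (y * e)) := by
    calc x * f * (y * e) ≤ x * f * (y * (e * (x * f * (y * e)))) :=
          mul_le_mul_right (mul_le_mul_right h1 y) (x * f)
      _ = (x * f * (y * e)) * (x * f * (y * e)) := by simp only [mul_assoc]
  have hF : f * e * z ≤ (f * e * z) * (f * e * z) := by
    calc f * e * z ≤ (f * e * z * (f * e)) * z := mul_le_mul_left hz z
      _ = (f * e * z) * (f * e * z) := by simp only [mul_assoc]
  obtain ⟨c, hc⟩ := (hcomm _ _ hE hF).1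
  -- hc : (x*f*(y*e)) * (f*e*z) ≤ (f*e*z) * c * (x*f*(y*e))
  have hff : f ≤ f * ((y * e) * f) := by
    have hf' : f ≤ (y * e) * f := hf.trans (mul_le_mul_left fy f)
    exact hf.trans (mul_le_mul_right hf' f)
  refine ⟨e * z * c * (x * f * (y * e)) * (f * e), ?_⟩
  calc e ≤ e * e := he
    _ ≤ (x * f) * e := mul_le_mul_left ex e
    _ ≤ (x * (f * ((y * e) * f))) * e := mul_le_mul_left (mul_le_mul_right hff x) e
    _ = (x * f * (y * e)) * (f * e) := by simp only [mul_assoc]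
    _ ≤ (x * f * (y * e)) * (f * e * z * (f * e)) := mul_le_mul_right hz _
    _ = ((x * f * (y * e)) * (f * e * z)) * (f * e) := by simp only [mul_assoc]
    _ ≤ ((f * e * z) * c * (x * f * (y * e))) * (f * e) := mul_le_mul_left hc _
    _ = f * (e * z * c * (x * f * (y * e)) * (f * e)) := by simp only [mul_assoc]

theorem stmt5
    (hreg : ∀ a : S, ∃ x, a ≤ a * x * a)
    (hcomm : ∀ e f : S, e ≤ e * e → f ≤ f * f →
      (∃ x, e * f ≤ f * x * e) ∧ (∃ y, f * e ≤ e * y * f))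
    (e f : S) (he : e ≤ e * e) (hf : f ≤ f * f) (hLf : GreenL e f) :
    GreenH e f := by
  refine ⟨hLf, ?_⟩
  -- extract e ≤ x * f
  have hef : e ∈ leftIdeal f := by
    rw [← hLf]; exact Or.inl le_rfl
  have hfe : f ∈ leftIdeal e := by
    rw [hLf]; exact Or.inl le_rfl
  obtain ⟨x, ex⟩ : ∃ x, e ≤ x * f := by
    rcases hef with h | ⟨x, hx⟩
    · exact ⟨f, h.trans hf⟩
    · exact ⟨x, hx⟩
  obtain ⟨y, fy⟩ : ∃ y, f ≤ y * e := by
    rcases hfe with h | ⟨y, hy⟩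
    · exact ⟨e, h.trans he⟩
    · exact ⟨y, hy⟩
  obtain ⟨u, hu⟩ := aux_le_mul hreg hcomm e f he hf x y ex fy
  obtain ⟨v, hv⟩ := aux_le_mul hreg hcomm f e hf he y x fy ex
  -- hu : e ≤ f * u, hv : f ≤ e * v
  ext t
  simp only [rightIdeal, Set.mem_setOf_eq]
  constructor
  · rintro (h | ⟨w, hw⟩)
    · exact Or.inr ⟨u, h.trans hu⟩
    · refine Or.inr ⟨u * w, ?_⟩
      calc t ≤ e * w := hw
        _ ≤ (f * u) * w := mul_le_mul_left hu w
        _ = f * (u * w) := mul_assoc ..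
  · rintro (h | ⟨w, hw⟩)
    · exact Or.inr ⟨v, h.trans hv⟩
    · refine Or.inr ⟨v * w, ?_⟩
      calc t ≤ f * w := hw
        _ ≤ (e * v) * w := mul_le_mul_left hv w
        _ = e * (v * w) := mul_assoc ..
end

section
/- Let S be a regular ordered semigroup such that for all ordered idempotents e, f, e L f implies e H f and e R f implies e H f. Then S is inverse: any two inverses of the same element are H-related. -/
variable {S : Type*} [Semigroup S] [PartialOrder S]
  [CovariantClass S S (· * ·) (· ≤ ·)]
  [CovariantClass S S (Function.swap (· * ·)) (· ≤ ·)]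

lemma leftIdeal_subset {u v : S} (h : u ∈ leftIdeal v) : leftIdeal u ⊆ leftIdeal v := by
  intro t ht
  rcases ht with ht | ⟨x, hx⟩ <;> rcases h with h | ⟨y, hy⟩
  · exact Or.inl (ht.trans h)
  · exact Or.inr ⟨y, ht.trans hy⟩
  · exact Or.inr ⟨x, hx.trans (mul_le_mul_right h x)⟩
  · refine Or.inr ⟨x * y, ?_⟩
    calc t ≤ x * u := hx
      _ ≤ x * (y * v) := mul_le_mul_right hy x
      _ = x * y * v := (mul_assoc ..).symm

lemma rightIdeal_subset {u v : S} (h : u ∈ rightIdeal v) : rightIdeal u ⊆ rightIdeal v := by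
  intro t ht
  rcases ht with ht | ⟨x, hx⟩ <;> rcases h with h | ⟨y, hy⟩
  · exact Or.inl (ht.trans h)
  · exact Or.inr ⟨y, ht.trans hy⟩
  · exact Or.inr ⟨x, hx.trans (mul_le_mul_left h x)⟩
  · refine Or.inr ⟨y * x, ?_⟩
    calc t ≤ u * x := hx
      _ ≤ (v * y) * x := mul_le_mul_left hy x
      _ = v * (y * x) := mul_assoc ..

lemma greenL_of {u v : S} (h1 : u ∈ leftIdeal v) (h2 : v ∈ leftIdeal u) : GreenL u v :=
  Set.Subset.antisymm (leftIdeal_subset h1) (leftIdeal_subset h2)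

lemma greenR_of {u v : S} (h1 : u ∈ rightIdeal v) (h2 : v ∈ rightIdeal u) : GreenR u v :=
  Set.Subset.antisymm (rightIdeal_subset h1) (rightIdeal_subset h2)

theorem stmt6
    (hreg : ∀ a : S, ∃ x, a ≤ a * x * a)
    (hL : ∀ e f : S, e ≤ e * e → f ≤ f * f → GreenL e f → GreenH e f)
    (hR : ∀ e f : S, e ≤ e * e → f ≤ f * f → GreenR e f → GreenH e f) :
    ∀ a b c : S, OrdInv a b → OrdInv a c → GreenH b c := by
  intro a b c ⟨hab, hba⟩ ⟨hac, hca⟩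
  -- idempotents
  have idba : b * a ≤ (b * a) * (b * a) := by
    calc b * a ≤ (b * a * b) * a := mul_le_mul_left hba a
      _ = (b * a) * (b * a) := by simp [mul_assoc]
  have idca : c * a ≤ (c * a) * (c * a) := by
    calc c * a ≤ (c * a * c) * a := mul_le_mul_left hca a
      _ = (c * a) * (c * a) := by simp [mul_assoc]
  have idab : a * b ≤ (a * b) * (a * b) := by
    calc a * b ≤ (a * b * a) * b := mul_le_mul_left hab b
      _ = (a * b) * (a * b) := by simp [mul_assoc]
  have idac : a * c ≤ (a * c) * (a * c) := by
    calc a * c ≤ (a * c * a) * c := mul_le_mul_left hac c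
      _ = (a * c) * (a * c) := by simp [mul_assoc]
  -- b*a L a and c*a L a
  have Lba : GreenL (b * a) a :=
    greenL_of (Or.inr ⟨b, le_rfl⟩) (Or.inr ⟨a, by rw [← mul_assoc]; exact hab⟩)
  have Lca : GreenL (c * a) a :=
    greenL_of (Or.inr ⟨c, le_rfl⟩) (Or.inr ⟨a, by rw [← mul_assoc]; exact hac⟩)
  -- a*b R a and a*c R a
  have Rab : GreenR (a * b) a :=
    greenR_of (Or.inr ⟨b, le_rfl⟩) (Or.inr ⟨a, hab⟩)
  have Rac : GreenR (a * c) a :=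
    greenR_of (Or.inr ⟨c, le_rfl⟩) (Or.inr ⟨a, hac⟩)
  -- apply hypotheses
  have Hba : GreenH (b * a) (c * a) :=
    hL _ _ idba idca (Lba.trans Lca.symm)
  have Hab : GreenH (a * b) (a * c) :=
    hR _ _ idab idac (Rab.trans Rac.symm)
  -- b L a*b, c L a*c
  have Lbab : GreenL b (a * b) :=
    greenL_of (Or.inr ⟨b, by rw [mul_assoc] at hba; exact hba⟩)
      (Or.inr ⟨a, le_rfl⟩)
  have Lcac : GreenL c (a * c) :=
    greenL_of (Or.inr ⟨c, by rw [mul_assoc] at hca; exact hca⟩)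
      (Or.inr ⟨a, le_rfl⟩)
  -- b R b*a, c R c*a
  have Rbba : GreenR b (b * a) :=
    greenR_of (Or.inr ⟨b, by rw [mul_assoc] at hba ⊢; exact hba⟩) (Or.inr ⟨a, le_rfl⟩)
  have Rcca : GreenR c (c * a) :=
    greenR_of (Or.inr ⟨c, by rw [mul_assoc] at hca ⊢; exact hca⟩) (Or.inr ⟨a, le_rfl⟩)
  exact ⟨Lbab.trans (Hab.1.trans Lcac.symm), Rbba.trans (Hba.2.trans Rcca.symm)⟩
end

section
/- Let S be an inverse ordered semigroup. For a, b ∈ S with inverses a' ∈ V_≤(a), b' ∈ V_≤(b): a L b if and only if a'a H b'b. -/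
variable {S : Type*} [Semigroup S] [PartialOrder S]
  [CovariantClass S S (· * ·) (· ≤ ·)]
  [CovariantClass S S (Function.swap (· * ·)) (· ≤ ·)]

/-! Auxiliary lemmas -/

lemma my_leftIdeal_mono {s t : S} (h : s ∈ leftIdeal t) : leftIdeal s ⊆ leftIdeal t := by
  rintro u (hu | ⟨z, hz⟩) <;> rcases h with h | ⟨w, hw⟩
  · exact Or.inl (hu.trans h)
  · exact Or.inr ⟨w, hu.trans hw⟩
  · exact Or.inr ⟨z, hz.trans (mul_le_mul_right h z)⟩
  · refine Or.inr ⟨z * w, hz.trans ?_⟩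
    calc z * s ≤ z * (w * t) := mul_le_mul_right hw z
      _ = z * w * t := (mul_assoc _ _ _).symm

lemma my_rightIdeal_mono {s t : S} (h : s ∈ rightIdeal t) : rightIdeal s ⊆ rightIdeal t := by
  rintro u (hu | ⟨z, hz⟩) <;> rcases h with h | ⟨w, hw⟩
  · exact Or.inl (hu.trans h)
  · exact Or.inr ⟨w, hu.trans hw⟩
  · exact Or.inr ⟨z, hz.trans (mul_le_mul_left h z)⟩
  · refine Or.inr ⟨w * z, hz.trans ?_⟩
    calc s * z ≤ t * w * z := mul_le_mul_left hw z
      _ = t * (w * z) := mul_assoc _ _ _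

lemma my_leftIdeal_eq {s t : S} (h1 : s ∈ leftIdeal t) (h2 : t ∈ leftIdeal s) :
    leftIdeal s = leftIdeal t :=
  Set.Subset.antisymm (my_leftIdeal_mono h1) (my_leftIdeal_mono h2)

lemma my_rightIdeal_eq {s t : S} (h1 : s ∈ rightIdeal t) (h2 : t ∈ rightIdeal s) :
    rightIdeal s = rightIdeal t :=
  Set.Subset.antisymm (my_rightIdeal_mono h1) (my_rightIdeal_mono h2)

/-- `a L a'a` for an ordered inverse `a'` of `a`. -/
lemma my_greenL_inv {a a' : S} (ha : OrdInv a a') : GreenL a (a' * a) := by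
  refine my_leftIdeal_eq (Or.inr ⟨a, ?_⟩) (Or.inr ⟨a', le_rfl⟩)
  calc a ≤ a * a' * a := ha.1
    _ = a * (a' * a) := mul_assoc _ _ _

theorem stmt8
    (hreg : ∀ a : S, ∃ x, a ≤ a * x * a)
    (hinv : ∀ a b c : S, OrdInv a b → OrdInv a c → GreenH b c)
    (a b a' b' : S) (ha : OrdInv a a') (hb : OrdInv b b') :
    GreenL a b ↔ GreenH (a' * a) (b' * b) := by
  obtain ⟨ha1, ha2⟩ := ha
  obtain ⟨hb1, hb2⟩ := hb
  have ha1' : a ≤ a * (a' * a) := ha1.trans_eq (mul_assoc _ _ _)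
  have hb1' : b ≤ b * (b' * b) := hb1.trans_eq (mul_assoc _ _ _)
  have gLa : GreenL a (a' * a) := my_greenL_inv ⟨ha1, ha2⟩
  have gLb : GreenL b (b' * b) := my_greenL_inv ⟨hb1, hb2⟩
  constructor
  · intro hL
    -- extract left multipliers
    have hmemab : a ∈ leftIdeal b := by
      have : a ∈ leftIdeal a := Or.inl le_rfl
      rwa [hL] at this
    have hmemba : b ∈ leftIdeal a := by
      have : b ∈ leftIdeal b := Or.inl le_rfl
      rwa [← hL] at this
    obtain ⟨y, hy⟩ : ∃ y, a ≤ y * b := by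
      rcases hmemab with h | ⟨y, hy⟩
      · exact ⟨a * a', ha1.trans (mul_le_mul_right h (a * a'))⟩
      · exact ⟨y, hy⟩
    obtain ⟨x, hx⟩ : ∃ x, b ≤ x * a := by
      rcases hmemba with h | ⟨x, hx⟩
      · exact ⟨b * b', hb1.trans (mul_le_mul_right h (b * b'))⟩
      · exact ⟨x, hx⟩
    set p : S := a' * (y * b) with hp
    set q : S := b' * (x * a) with hq
    -- p is an idempotent-like element: p ≤ p * p
    have hpp : p ≤ p * p := by
      calc p = a' * (y * b) := hp
        _ ≤ a' * a * a' * (y * b) := mul_le_mul_left ha2 _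
        _ ≤ a' * (y * b) * a' * (y * b) := by
            exact mul_le_mul_left (mul_le_mul_left (mul_le_mul_right hy a') a') _
        _ = p * p := by rw [hp]; simp [mul_assoc]
    have hOpp : OrdInv p p := by
      have : p ≤ p * p * p := by
        calc p ≤ p * p := hpp
          _ ≤ p * (p * p) := mul_le_mul_right hpp p
          _ = p * p * p := (mul_assoc _ _ _).symm
      exact ⟨this, this⟩
    -- p and q are mutually inverse
    have hpq : p ≤ p * q * p := by
      calc p = a' * (y * b) := hp
        _ ≤ a' * (y * (b * (b' * b))) := mul_le_mul_right (mul_le_mul_right hb1' y) a'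
        _ ≤ a' * (y * (b * (b' * (x * a)))) :=
            mul_le_mul_right (mul_le_mul_right (mul_le_mul_right (mul_le_mul_right hx b') b) y) a'
        _ ≤ a' * (y * (b * (b' * (x * (a * (a' * a)))))) := by
            exact mul_le_mul_right (mul_le_mul_right (mul_le_mul_right
              (mul_le_mul_right (mul_le_mul_right ha1' x) b') b) y) a'
        _ ≤ a' * (y * (b * (b' * (x * (a * (a' * (y * b))))))) := by
            exact mul_le_mul_right (mul_le_mul_right (mul_le_mul_right (mul_le_mul_right
              (mul_le_mul_right (mul_le_mul_right (mul_le_mul_right hy a') a) x) b') b) y) a'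
        _ = p * q * p := by rw [hp, hq]; simp [mul_assoc]
    have hqp : q ≤ q * p * q := by
      calc q = b' * (x * a) := hq
        _ ≤ b' * (x * (a * (a' * a))) := mul_le_mul_right (mul_le_mul_right ha1' x) b'
        _ ≤ b' * (x * (a * (a' * (y * b)))) :=
            mul_le_mul_right (mul_le_mul_right (mul_le_mul_right (mul_le_mul_right hy a') a) x) b'
        _ ≤ b' * (x * (a * (a' * (y * (b * (b' * b)))))) := by
            exact mul_le_mul_right (mul_le_mul_right (mul_le_mul_right
              (mul_le_mul_right (mul_le_mul_right hb1' y) a') a) x) b'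
        _ ≤ b' * (x * (a * (a' * (y * (b * (b' * (x * a))))))) := by
            exact mul_le_mul_right (mul_le_mul_right (mul_le_mul_right (mul_le_mul_right
              (mul_le_mul_right (mul_le_mul_right (mul_le_mul_right hx b') b) y) a') a) x) b'
        _ = q * p * q := by rw [hp, hq]; simp [mul_assoc]
    have hH : GreenH p q := hinv p p q hOpp ⟨hpq, hqp⟩
    -- rightIdeal (a'*a) = rightIdeal p
    have hRa : rightIdeal (a' * a) = rightIdeal p := by
      refine my_rightIdeal_eq (Or.inl (mul_le_mul_right hy a')) (Or.inr ⟨a' * (y * b), ?_⟩)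
      calc p = a' * (y * b) := hp
        _ ≤ a' * a * a' * (y * b) := mul_le_mul_left ha2 _
        _ = a' * a * (a' * (y * b)) := mul_assoc _ _ _
    have hRb : rightIdeal (b' * b) = rightIdeal q := by
      refine my_rightIdeal_eq (Or.inl (mul_le_mul_right hx b')) (Or.inr ⟨b' * (x * a), ?_⟩)
      calc q = b' * (x * a) := hq
        _ ≤ b' * b * b' * (x * a) := mul_le_mul_left hb2 _
        _ = b' * b * (b' * (x * a)) := mul_assoc _ _ _
    constructor
    · -- GreenL (a'*a) (b'*b)
      show leftIdeal (a' * a) = leftIdeal (b' * b)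
      rw [← gLa, ← gLb] at *
      exact hL
    · -- GreenR
      show rightIdeal (a' * a) = rightIdeal (b' * b)
      rw [hRa, hRb]
      exact hH.2
  · intro hH
    have : leftIdeal a = leftIdeal b := by
      rw [gLa, gLb]
      exact hH.1
    exact this
end

section
/- Let S be an inverse ordered semigroup, a ∈ S, a' ∈ V_≤(a), and e an ordered idempotent. Then there exist x, y ∈ S such that aexa' and a'eya are ordered idempotents. -/
variable {S : Type*} [Semigroup S] [PartialOrder S]
  [CovariantClass S S (· * ·) (· ≤ ·)]
  [CovariantClass S S (Function.swap (· * ·)) (· ≤ ·)]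

/-- Key construction: if `b'` is an ordered inverse of `b` and `c = b*e*b'`, pick `s` with
`c ≤ c*s*c`; then `c * ((b*b') * ((s*c*s) * (b*b')))` is an ordered idempotent of the form
`b*e*x*b'`. -/
lemma stmt9_aux (hreg : ∀ a : S, ∃ x, a ≤ a * x * a) (e : S)
    (b b' : S) (hb : b ≤ b * b' * b) (hb' : b' ≤ b' * b * b') :
    ∃ x, b * e * x * b' ≤ (b * e * x * b') * (b * e * x * b') := by
  obtain ⟨s, hs⟩ := hreg (b * e * b')
  set c := b * e * b' with hc
  -- c ≤ c * (b*b')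
  have h1 : c ≤ c * (b * b') := by
    have h := mul_le_mul_right hb' (b * e)
    simp only [hc, mul_assoc] at h ⊢
    exact h
  -- c ≤ (b*b') * c
  have h2 : c ≤ (b * b') * c := by
    have h := mul_le_mul_left hb (e * b')
    simp only [hc, mul_assoc] at h ⊢
    exact h
  set g := (b * b') * ((s * (c * s)) * (b * b')) with hg
  have hcgc : c ≤ c * g * c := by
    calc c ≤ c * s * c := hs
      _ ≤ (c * s) * (c * s * c) := mul_le_mul_right hs (c * s)
      _ = c * (s * (c * s)) * c := by simp only [mul_assoc]
      _ ≤ (c * (b * b')) * (s * (c * s)) * c :=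
          mul_le_mul_left (mul_le_mul_left h1 _) c
      _ ≤ (c * (b * b')) * (s * (c * s)) * ((b * b') * c) :=
          mul_le_mul_right h2 _
      _ = c * g * c := by rw [hg]; simp only [mul_assoc]
  refine ⟨b' * (b * (b' * (s * (c * (s * b))))), ?_⟩
  have hfin : c * g ≤ (c * g) * (c * g) := by
    calc c * g ≤ (c * g * c) * g := mul_le_mul_left hcgc g
      _ = (c * g) * (c * g) := by simp only [mul_assoc]
  simp only [hg, hc, mul_assoc] at hfin ⊢
  exact hfin

theorem stmt9
    (hreg : ∀ a : S, ∃ x, a ≤ a * x * a)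
    (hinv : ∀ a b c : S, OrdInv a b → OrdInv a c → GreenH b c)
    (a a' e : S) (ha : OrdInv a a') (he : e ≤ e * e) :
    (∃ x, a * e * x * a' ≤ (a * e * x * a') * (a * e * x * a')) ∧
    (∃ y, a' * e * y * a ≤ (a' * e * y * a) * (a' * e * y * a)) :=
  ⟨stmt9_aux hreg e a a' ha.1 ha.2, stmt9_aux hreg e a' a ha.2 ha.1⟩
end

section
/- Let S be an inverse ordered semigroup and a, b ∈ S with a' ∈ V_≤(a), b' ∈ V_≤(b). Then there exist x, y ∈ S such that ab ≤ a b b' x a' a b and b'a' ≤ b' a' a y b b' a'. -/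
variable {S : Type*} [Semigroup S] [PartialOrder S]
  [CovariantClass S S (· * ·) (· ≤ ·)]
  [CovariantClass S S (Function.swap (· * ·)) (· ≤ ·)]

lemma exists_ordinv (hreg : ∀ a : S, ∃ x, a ≤ a * x * a) (u : S) : ∃ g, OrdInv u g := by
  obtain ⟨x, hx⟩ := hreg u
  refine ⟨x * u * x, hx.trans ?_, ?_⟩
  · calc u * x * u ≤ u * x * (u * x * u) := mul_le_mul_right hx _
      _ = u * (x * u * x) * u := by simp only [mul_assoc]
  · calc x * u * x ≤ x * (u * x * u) * x :=
          mul_le_mul_left (mul_le_mul_right hx x) x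
      _ = x * u * x * (u * x) := by simp only [mul_assoc]
      _ ≤ x * u * x * (u * x * u * x) := mul_le_mul_right (mul_le_mul_left hx x) _
      _ = x * u * x * u * (x * u * x) := by simp only [mul_assoc]

lemma idem_exchange (hreg : ∀ a : S, ∃ x, a ≤ a * x * a)
    (hinv : ∀ a b c : S, OrdInv a b → OrdInv a c → GreenH b c)
    (e f : S) (he : e ≤ e * e) (hf : f ≤ f * f) :
    ∃ x, e * f ≤ f * x * e := by
  obtain ⟨g, hg1, hg2⟩ := exists_ordinv hreg (e * f)
  set k := f * g * e with hk
  have heff : e * f ≤ e * e * (f * f) := by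
    calc e * f ≤ e * e * f := mul_le_mul_left he f
      _ ≤ e * e * (f * f) := mul_le_mul_right hf _
  have hkk : k ≤ k * k := by
    calc k = f * g * e := rfl
      _ ≤ f * (g * (e * f) * g) * e := mul_le_mul_left (mul_le_mul_right hg2 f) e
      _ = (f * g * e) * (f * g * e) := by simp only [mul_assoc]
  have hkkk : k ≤ k * k * k := by
    calc k ≤ k * k := hkk
      _ ≤ k * (k * k) := mul_le_mul_right hkk k
      _ = k * k * k := (mul_assoc _ _ _).symm
  have hkef : k ≤ k * (e * f) * k := by
    calc k = f * g * e := rfl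
      _ ≤ f * (g * (e * f) * g) * e := mul_le_mul_left (mul_le_mul_right hg2 f) e
      _ ≤ f * (g * (e * e * (f * f)) * g) * e := by
          exact mul_le_mul_left (mul_le_mul_right
            (mul_le_mul_left (mul_le_mul_right heff g) g) f) e
      _ = (f * g * e) * (e * f) * (f * g * e) := by simp only [mul_assoc]
  have hefk : e * f ≤ (e * f) * k * (e * f) := by
    calc e * f ≤ e * f * g * (e * f) := hg1
      _ ≤ e * (f * f) * g * (e * e * f) :=
          mul_le_mul' (mul_le_mul_left (mul_le_mul_right hf e) g)
            (mul_le_mul_left he f)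
      _ = (e * f) * (f * g * e) * (e * f) := by simp only [mul_assoc]
  have hH : GreenH (e * f) k := hinv k (e * f) k ⟨hkef, hefk⟩ ⟨hkkk, hkkk⟩
  have hmemR : (e * f) ∈ rightIdeal (e * f) := Or.inr ⟨g * (e * f), by
    calc e * f ≤ e * f * g * (e * f) := hg1
      _ = e * f * (g * (e * f)) := by simp only [mul_assoc]⟩
  have hmemL : (e * f) ∈ leftIdeal (e * f) := Or.inr ⟨e * f * g, hg1⟩
  rw [hH.2] at hmemR
  rw [hH.1] at hmemL
  obtain ⟨u, hu⟩ : ∃ u, e * f ≤ f * u := by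
    rcases hmemR with h | ⟨x, h⟩
    · exact ⟨g * e, by simpa only [hk, mul_assoc] using h⟩
    · exact ⟨g * (e * x), by simpa only [hk, mul_assoc] using h⟩
  obtain ⟨v, hv⟩ : ∃ v, e * f ≤ v * e := by
    rcases hmemL with h | ⟨x, h⟩
    · exact ⟨f * g, h⟩
    · exact ⟨x * (f * g), by simpa only [hk, mul_assoc] using h⟩
  refine ⟨u * g * v, ?_⟩
  calc e * f ≤ e * f * g * (e * f) := hg1
    _ ≤ f * u * g * (v * e) := mul_le_mul' (mul_le_mul_left hu g) hv
    _ = f * (u * g * v) * e := by simp only [mul_assoc]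

theorem stmt10
    (hreg : ∀ a : S, ∃ x, a ≤ a * x * a)
    (hinv : ∀ a b c : S, OrdInv a b → OrdInv a c → GreenH b c)
    (a b a' b' : S) (ha : OrdInv a a') (hb : OrdInv b b') :
    (∃ x, a * b ≤ a * b * b' * x * a' * a * b) ∧
    (∃ y, b' * a' ≤ b' * a' * a * y * b * b' * a') := by
  have he : a' * a ≤ a' * a * (a' * a) := by
    calc a' * a ≤ a' * a * a' * a := mul_le_mul_left ha.2 a
      _ = a' * a * (a' * a) := by simp only [mul_assoc]
  have hf : b * b' ≤ b * b' * (b * b') := by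
    calc b * b' ≤ b * b' * b * b' := mul_le_mul_left hb.1 b'
      _ = b * b' * (b * b') := by simp only [mul_assoc]
  constructor
  · obtain ⟨x, hx⟩ := idem_exchange hreg hinv (a' * a) (b * b') he hf
    refine ⟨x, ?_⟩
    calc a * b ≤ a * a' * a * b := mul_le_mul_left ha.1 b
      _ ≤ a * a' * a * (b * b' * b) := mul_le_mul_right hb.1 _
      _ = a * ((a' * a) * (b * b')) * b := by simp only [mul_assoc]
      _ ≤ a * ((b * b') * x * (a' * a)) * b :=
          mul_le_mul_left (mul_le_mul_right hx a) b
      _ = a * b * b' * x * a' * a * b := by simp only [mul_assoc]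
  · obtain ⟨y, hy⟩ := idem_exchange hreg hinv (b * b') (a' * a) hf he
    refine ⟨y, ?_⟩
    calc b' * a' ≤ b' * b * b' * a' := mul_le_mul_left hb.2 a'
      _ ≤ b' * b * b' * (a' * a * a') := mul_le_mul_right ha.2 _
      _ = b' * ((b * b') * (a' * a)) * a' := by simp only [mul_assoc]
      _ ≤ b' * ((a' * a) * y * (b * b')) * a' :=
          mul_le_mul_left (mul_le_mul_right hy b') a'
      _ = b' * a' * a * y * b * b' * a' := by simp only [mul_assoc]
end

section
/- Let S be an inverse ordered semigroup, e, f ordered idempotents, x ∈ (eSf] (x ≤ esf for some s ∈ S), and x' ∈ V_≤(x). Then x' ∈ (fSe], i.e., x' ≤ fte for some t ∈ S. -/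
variable {S : Type*} [Semigroup S] [PartialOrder S]
  [CovariantClass S S (· * ·) (· ≤ ·)]
  [CovariantClass S S (Function.swap (· * ·)) (· ≤ ·)]

theorem stmt11
    (hreg : ∀ a : S, ∃ z, a ≤ a * z * a)
    (hinv : ∀ a b c : S, OrdInv a b → OrdInv a c → GreenH b c)
    (e f x x' s : S) (he : e ≤ e * e) (hf : f ≤ f * f)
    (hx : x ≤ e * s * f) (hx' : OrdInv x x') :
    ∃ t, x' ≤ f * t * e := by
  obtain ⟨hxx, hx'x⟩ := hx'
  set X := e * s * f with hX
  set m := X * x' * X with hm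
  set y := f * x' * e with hy
  set c := y * m * y with hc
  -- x ≤ X x' X
  have h2 : x ≤ m := by
    calc x ≤ x * x' * x := hxx
    _ ≤ X * x' * X := mul_le_mul' (mul_le_mul' hx le_rfl) hx
  -- x' is an inverse of m
  have hxm : x' ≤ x' * m * x' := by
    calc x' ≤ x' * x * x' := hx'x
    _ ≤ x' * m * x' := mul_le_mul' (mul_le_mul' le_rfl h2) le_rfl
  have hmx : m ≤ m * x' * m := by
    calc m = X * x' * X := hm
    _ ≤ X * (x' * m * x') * X := mul_le_mul' (mul_le_mul' le_rfl hxm) le_rfl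
    _ = m * x' * m := by rw [hm]; simp only [mul_assoc]
  -- m ≤ m f and m ≤ e m
  have hXf : X ≤ X * f := by
    calc X = e * s * f := hX
    _ ≤ e * s * (f * f) := mul_le_mul' le_rfl hf
    _ = X * f := by rw [hX]; simp only [mul_assoc]
  have heX : X ≤ e * X := by
    calc X = e * s * f := hX
    _ ≤ (e * e) * s * f := mul_le_mul' (mul_le_mul' he le_rfl) le_rfl
    _ = e * X := by rw [hX]; simp only [mul_assoc]
  have hmf : m ≤ m * f := by
    calc m = X * x' * X := hm
    _ ≤ X * x' * (X * f) := mul_le_mul' le_rfl hXf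
    _ = m * f := by rw [hm]; simp only [mul_assoc]
  have hem : m ≤ e * m := by
    calc m = X * x' * X := hm
    _ ≤ (e * X) * x' * X := mul_le_mul' (mul_le_mul' heX le_rfl) le_rfl
    _ = e * m := by rw [hm]; simp only [mul_assoc]
  -- m ≤ m y m
  have hmy : m ≤ m * y * m := by
    calc m ≤ m * x' * m := hmx
    _ ≤ (m * f) * x' * (e * m) := mul_le_mul' (mul_le_mul' hmf le_rfl) hem
    _ = m * y * m := by rw [hy]; simp only [mul_assoc]
  -- c is an inverse of m
  have hmc : m ≤ m * c * m := by
    calc m ≤ m * y * m := hmy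
    _ ≤ m * y * (m * y * m) := mul_le_mul' le_rfl hmy
    _ = m * c * m := by rw [hc]; simp only [mul_assoc]
  have hcm : c ≤ c * m * c := by
    calc c = y * m * y := hc
    _ ≤ y * (m * y * m) * y := mul_le_mul' (mul_le_mul' le_rfl hmy) le_rfl
    _ ≤ y * (m * y * (m * y * m)) * y :=
        mul_le_mul' (mul_le_mul' le_rfl (mul_le_mul' le_rfl hmy)) le_rfl
    _ = c * m * c := by rw [hc]; simp only [mul_assoc]
  -- x' and c are H-related
  have hH : GreenH x' c := hinv m x' c ⟨hmx, hxm⟩ ⟨hmc, hcm⟩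
  have hmemL : x' ∈ leftIdeal c := by
    rw [← hH.1]; exact Or.inl le_rfl
  have hmemR : x' ∈ rightIdeal c := by
    rw [← hH.2]; exact Or.inl le_rfl
  -- c = f T e
  have hcT : c = f * (x' * e * m * f * x') * e := by
    rw [hc, hy]; simp only [mul_assoc]
  set T := x' * e * m * f * x' with hT
  rcases hmemL with h | ⟨u, hu⟩
  · exact ⟨T, hcT ▸ h⟩
  · rcases hmemR with h | ⟨v, hv⟩
    · exact ⟨T, hcT ▸ h⟩
    · refine ⟨T * e * v * x * u * f * T, ?_⟩
      calc x' ≤ x' * x * x' := hx'x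
      _ ≤ (c * v) * x * (u * c) := mul_le_mul' (mul_le_mul' hv le_rfl) hu
      _ = ((f * T * e) * v) * x * (u * (f * T * e)) := by rw [hcT]
      _ = f * (T * e * v * x * u * f * T) * e := by simp only [mul_assoc]
end

section
/- Let S be a regular ordered semigroup such that for every pair of ordered idempotents e, f and every x ∈ (eSf], every inverse x' of x lies in (fSe]. Then S is inverse: any two inverses of an element are H-related. -/
variable {S : Type*} [Semigroup S] [PartialOrder S]
  [CovariantClass S S (· * ·) (· ≤ ·)]
  [CovariantClass S S (Function.swap (· * ·)) (· ≤ ·)]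

lemma leftIdeal_mono {b c : S} (h : c ∈ leftIdeal b) : leftIdeal c ⊆ leftIdeal b := by
  rintro t (ht | ⟨y, ht⟩) <;> rcases h with hc | ⟨x, hc⟩
  · exact Or.inl (ht.trans hc)
  · exact Or.inr ⟨x, ht.trans hc⟩
  · exact Or.inr ⟨y, ht.trans (mul_le_mul_right hc y)⟩
  · refine Or.inr ⟨y * x, ?_⟩
    calc t ≤ y * c := ht
      _ ≤ y * (x * b) := mul_le_mul_right hc y
      _ = y * x * b := (mul_assoc ..).symm

lemma rightIdeal_mono {b c : S} (h : c ∈ rightIdeal b) : rightIdeal c ⊆ rightIdeal b := by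
  rintro t (ht | ⟨y, ht⟩) <;> rcases h with hc | ⟨x, hc⟩
  · exact Or.inl (ht.trans hc)
  · exact Or.inr ⟨x, ht.trans hc⟩
  · exact Or.inr ⟨y, ht.trans (mul_le_mul_left hc y)⟩
  · refine Or.inr ⟨x * y, ?_⟩
    calc t ≤ c * y := ht
      _ ≤ (b * x) * y := mul_le_mul_left hc y
      _ = b * (x * y) := mul_assoc ..

/-- If `y` is an inverse of `a` and `z` any element with `OrdInv a z`, then
`y` lies in both ideals of `z`'s inverse... key step. -/
lemma key_s12 {a y z : S} (hcond : ∀ e f x x' s : S, e ≤ e * e → f ≤ f * f →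
      x ≤ e * s * f → OrdInv x x' → ∃ t, x' ≤ f * t * e)
    (hz : OrdInv a z) (hy : OrdInv a y) :
    y ∈ leftIdeal z ∧ y ∈ rightIdeal z := by
  obtain ⟨hz1, hz2⟩ := hz
  have he : a * z ≤ (a * z) * (a * z) := by
    calc a * z ≤ (a * z * a) * z := mul_le_mul_left hz1 z
      _ = (a * z) * (a * z) := by simp [mul_assoc]
  have hf : z * a ≤ (z * a) * (z * a) := by
    calc z * a ≤ (z * a * z) * a := mul_le_mul_left hz2 a
      _ = (z * a) * (z * a) := by simp [mul_assoc]
  have ha : a ≤ (a * z) * a * (z * a) := by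
    calc a ≤ a * z * a := hz1
      _ ≤ a * z * (a * z * a) := mul_le_mul_right hz1 (a * z)
      _ = (a * z) * a * (z * a) := by simp [mul_assoc]
  obtain ⟨t, hyt⟩ := hcond (a * z) (z * a) a y a he hf ha hy
  constructor
  · refine Or.inr ⟨z * a * t * a, ?_⟩
    calc y ≤ (z * a) * t * (a * z) := hyt
      _ = (z * a * t * a) * z := by simp [mul_assoc]
  · refine Or.inr ⟨a * t * (a * z), ?_⟩
    calc y ≤ (z * a) * t * (a * z) := hyt
      _ = z * (a * t * (a * z)) := by simp [mul_assoc]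

theorem stmt12
    (hreg : ∀ a : S, ∃ z, a ≤ a * z * a)
    (hcond : ∀ e f x x' s : S, e ≤ e * e → f ≤ f * f →
      x ≤ e * s * f → OrdInv x x' → ∃ t, x' ≤ f * t * e) :
    ∀ a b c : S, OrdInv a b → OrdInv a c → GreenH b c := by
  intro a b c hab hac
  obtain ⟨hbLc, hbRc⟩ := key_s12 hcond hac hab
  obtain ⟨hcLb, hcRb⟩ := key_s12 hcond hab hac
  exact ⟨Set.Subset.antisymm (leftIdeal_mono hbLc) (leftIdeal_mono hcLb),
    Set.Subset.antisymm (rightIdeal_mono hbRc) (rightIdeal_mono hcRb)⟩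
end

section
/- Let S be a regular ordered semigroup in which for every ordered idempotent e and every inverse e' ∈ V_≤(e), the elements ee' and e'e are H-commutative (there exist x, y with (ee')(e'e) ≤ (e'e)x(ee') and (e'e)(ee') ≤ (ee')y(e'e)). Then any two ordered idempotents of S are H-commutative, and hence S is inverse. -/
variable {S : Type*} [Semigroup S] [PartialOrder S]
  [CovariantClass S S (· * ·) (· ≤ ·)]
  [CovariantClass S S (Function.swap (· * ·)) (· ≤ ·)]

private lemma ordInv_exists (hreg : ∀ a : S, ∃ x, a ≤ a * x * a) (a : S) :
    ∃ b : S, OrdInv a b := by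
  obtain ⟨x, hx⟩ := hreg a
  refine ⟨x * a * x, ?_, ?_⟩
  · calc a ≤ a * x * a := hx
      _ ≤ a * x * (a * x * a) := by gcongr
      _ = a * (x * a * x) * a := by simp only [mul_assoc]
  · calc x * a * x ≤ x * (a * x * a) * x := by gcongr
      _ ≤ x * (a * x * (a * x * a)) * x := by gcongr
      _ = x * a * x * a * (x * a * x) := by simp only [mul_assoc]

private lemma comm_idem (hreg : ∀ a : S, ∃ x, a ≤ a * x * a)
    (hcond : ∀ e e' : S, e ≤ e * e → OrdInv e e' →
      (∃ x, (e * e') * (e' * e) ≤ (e' * e) * x * (e * e')) ∧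
      (∃ y, (e' * e) * (e * e') ≤ (e * e') * y * (e' * e)))
    (e f : S) (he : e ≤ e * e) (hf : f ≤ f * f) :
    ∃ x, e * f ≤ f * x * e := by
  obtain ⟨v, hv1, hv2⟩ := ordInv_exists hreg (e * f)
  have hg2 : f * v * e ≤ (f * v * e) * (f * v * e) := by
    calc f * v * e ≤ f * (v * (e * f) * v) * e := by gcongr
      _ = (f * v * e) * (f * v * e) := by simp only [mul_assoc]
  have hinv : OrdInv (f * v * e) (e * f) := by
    constructor
    · calc f * v * e ≤ f * (v * (e * f) * v) * e := by gcongr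
        _ = f * v * (e * f) * (v * e) := by simp only [mul_assoc]
        _ ≤ f * v * ((e * e) * (f * f)) * (v * e) := by gcongr
        _ = (f * v * e) * (e * f) * (f * v * e) := by simp only [mul_assoc]
    · calc e * f ≤ e * f * v * (e * f) := hv1
        _ ≤ e * (f * f) * v * ((e * e) * f) := by
            calc e * f * v * (e * f) ≤ e * (f * f) * v * (e * f) := by gcongr
              _ ≤ e * (f * f) * v * ((e * e) * f) := by gcongr
        _ = (e * f) * (f * v * e) * (e * f) := by simp only [mul_assoc]
  obtain ⟨y, hy⟩ := (hcond (f * v * e) (e * f) hg2 hinv).2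
  refine ⟨v * e * (e * f) * y * (e * f) * (f * v), ?_⟩
  calc e * f ≤ (e * f) * (f * v * e) * (e * f) := hinv.2
    _ ≤ (e * f) * ((f * v * e) * (f * v * e)) * (e * f) := by gcongr
    _ = ((e * f) * (f * v * e)) * ((f * v * e) * (e * f)) := by simp only [mul_assoc]
    _ ≤ ((f * v * e) * (e * f)) * y * ((e * f) * (f * v * e)) := hy
    _ = f * (v * e * (e * f) * y * (e * f) * (f * v)) * e := by simp only [mul_assoc]

private lemma left_sub {b c w : S} (h : b ≤ w * c) : leftIdeal b ⊆ leftIdeal c := by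
  rintro t (ht | ⟨x, ht⟩)
  · exact Or.inr ⟨w, ht.trans h⟩
  · refine Or.inr ⟨x * w, ht.trans ?_⟩
    calc x * b ≤ x * (w * c) := by gcongr
      _ = x * w * c := (mul_assoc _ _ _).symm

private lemma right_sub {b c w : S} (h : b ≤ c * w) : rightIdeal b ⊆ rightIdeal c := by
  rintro t (ht | ⟨x, ht⟩)
  · exact Or.inr ⟨w, ht.trans h⟩
  · refine Or.inr ⟨w * x, ht.trans ?_⟩
    calc b * x ≤ c * w * x := by gcongr
      _ = c * (w * x) := mul_assoc _ _ _

theorem stmt13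
    (hreg : ∀ a : S, ∃ x, a ≤ a * x * a)
    (hcond : ∀ e e' : S, e ≤ e * e → OrdInv e e' →
      (∃ x, (e * e') * (e' * e) ≤ (e' * e) * x * (e * e')) ∧
      (∃ y, (e' * e) * (e * e') ≤ (e * e') * y * (e' * e))) :
    (∀ e f : S, e ≤ e * e → f ≤ f * f →
      (∃ x, e * f ≤ f * x * e) ∧ (∃ y, f * e ≤ e * y * f)) ∧
    (∀ a b c : S, OrdInv a b → OrdInv a c → GreenH b c) := by
  refine ⟨fun e f he hf => ⟨comm_idem hreg hcond e f he hf,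
      comm_idem hreg hcond f e hf he⟩, ?_⟩
  intro a b c hb hc
  -- key lemmas for arbitrary inverses p, q of a
  have keyL : ∀ p q : S, OrdInv a p → OrdInv a q → ∃ w, p ≤ w * q := by
    intro p q hp hq
    have hip : a * p ≤ (a * p) * (a * p) := by
      calc a * p ≤ a * (p * a * p) := by gcongr; exact hp.2
        _ = (a * p) * (a * p) := by simp only [mul_assoc]
    have hiq : a * q ≤ (a * q) * (a * q) := by
      calc a * q ≤ a * (q * a * q) := by gcongr; exact hq.2
        _ = (a * q) * (a * q) := by simp only [mul_assoc]
    obtain ⟨x, hx⟩ := comm_idem hreg hcond (a * q) (a * p) hiq hip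
    refine ⟨p * a * p * x * a, ?_⟩
    calc p ≤ p * a * p := hp.2
      _ ≤ p * (a * q * a) * p := by gcongr; exact hq.1
      _ = p * ((a * q) * (a * p)) := by simp only [mul_assoc]
      _ ≤ p * ((a * p) * x * (a * q)) := by gcongr
      _ = p * a * p * x * a * q := by simp only [mul_assoc]
  have keyR : ∀ p q : S, OrdInv a p → OrdInv a q → ∃ w, p ≤ q * w := by
    intro p q hp hq
    have hip : p * a ≤ (p * a) * (p * a) := by
      calc p * a ≤ (p * a * p) * a := by gcongr; exact hp.2
        _ = (p * a) * (p * a) := by simp only [mul_assoc]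
    have hiq : q * a ≤ (q * a) * (q * a) := by
      calc q * a ≤ (q * a * q) * a := by gcongr; exact hq.2
        _ = (q * a) * (q * a) := by simp only [mul_assoc]
    obtain ⟨x, hx⟩ := comm_idem hreg hcond (p * a) (q * a) hip hiq
    refine ⟨a * x * (p * a * p), ?_⟩
    calc p ≤ p * a * p := hp.2
      _ ≤ p * (a * q * a) * p := by gcongr; exact hq.1
      _ = ((p * a) * (q * a)) * p := by simp only [mul_assoc]
      _ ≤ ((q * a) * x * (p * a)) * p := by gcongr
      _ = q * (a * x * (p * a * p)) := by simp only [mul_assoc]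
  obtain ⟨w1, h1⟩ := keyL b c hb hc
  obtain ⟨w2, h2⟩ := keyL c b hc hb
  obtain ⟨w3, h3⟩ := keyR b c hb hc
  obtain ⟨w4, h4⟩ := keyR c b hc hb
  exact ⟨Set.Subset.antisymm (left_sub h1) (left_sub h2),
    Set.Subset.antisymm (right_sub h3) (right_sub h4)⟩
end

section
/- Let S be a regular ordered semigroup in which ab H ba whenever ab and ba are both ordered idempotents. Then S is completely regular: for every a ∈ S there exists p ∈ S with a ≤ a²pa². -/
variable {S : Type*} [Semigroup S] [PartialOrder S]
  [CovariantClass S S (· * ·) (· ≤ ·)]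
  [CovariantClass S S (Function.swap (· * ·)) (· ≤ ·)]

theorem stmt14
    (hreg : ∀ a : S, ∃ x, a ≤ a * x * a)
    (hcond : ∀ a b : S, a * b ≤ (a * b) * (a * b) → b * a ≤ (b * a) * (b * a) →
      GreenH (a * b) (b * a)) :
    ∀ a : S, ∃ p, a ≤ a * a * p * (a * a) := by
  intro a
  obtain ⟨x, hx⟩ := hreg a
  have hax : a * x ≤ (a * x) * (a * x) := by
    calc a * x ≤ (a * x * a) * x := mul_le_mul_left hx x
      _ = (a * x) * (a * x) := by simp only [mul_assoc]
  have hxa : x * a ≤ (x * a) * (x * a) := by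
    calc x * a ≤ x * (a * x * a) := mul_le_mul_right hx x
      _ = (x * a) * (x * a) := by simp only [mul_assoc]
  have hH := hcond a x hax hxa
  have hR : (x * a) ∈ rightIdeal (a * x) := by
    rw [hH.2]; exact Or.inl le_rfl
  obtain ⟨u, hu⟩ : ∃ u, x * a ≤ (a * x) * u := by
    rcases hR with h | ⟨u, hu⟩
    · exact ⟨a * x, h.trans hax⟩
    · exact ⟨u, hu⟩
  have hL : (a * x) ∈ leftIdeal (x * a) := by
    rw [← hH.1]; exact Or.inl le_rfl
  obtain ⟨v, hv⟩ : ∃ v, a * x ≤ v * (x * a) := by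
    rcases hL with h | ⟨v, hv⟩
    · exact ⟨x * a, h.trans hxa⟩
    · exact ⟨v, hv⟩
  refine ⟨x * u * x * v * x, ?_⟩
  calc a ≤ a * x * a := hx
    _ ≤ (a * x * a) * x * (a * x * a) :=
        mul_le_mul' (mul_le_mul_left hx x) hx
    _ = (a * (x * a)) * (x * ((a * x) * a)) := by simp only [mul_assoc]
    _ ≤ (a * ((a * x) * u)) * (x * ((v * (x * a)) * a)) :=
        mul_le_mul' (mul_le_mul_right hu a)
          (mul_le_mul_right (mul_le_mul_left hv a) x)
    _ = a * a * (x * u * x * v * x) * (a * a) := by simp only [mul_assoc]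
end

section
/- Let S be a regular ordered semigroup in which every ordered idempotent H-commutes with every element of S (for e ≤ e² and a ∈ S there exist x, y with ae ≤ exa and ea ≤ aye). Then for ordered idempotents e, f, e J f implies e H f. -/
variable {S : Type*} [Semigroup S] [PartialOrder S]
  [CovariantClass S S (· * ·) (· ≤ ·)]
  [CovariantClass S S (Function.swap (· * ·)) (· ≤ ·)]

lemma left_subset' {a b : S} (h : a ∈ leftIdeal b) : leftIdeal a ⊆ leftIdeal b := by
  intro t ht
  rcases ht with ht | ⟨y, ht⟩
  · rcases h with h | ⟨x, h⟩
    · exact Or.inl (ht.trans h)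
    · exact Or.inr ⟨x, ht.trans h⟩
  · rcases h with h | ⟨x, h⟩
    · exact Or.inr ⟨y, ht.trans (mul_le_mul_right h y)⟩
    · exact Or.inr ⟨y * x, ht.trans (by
        calc y * a ≤ y * (x * b) := mul_le_mul_right h y
          _ = y * x * b := (mul_assoc _ _ _).symm)⟩

lemma right_subset' {a b : S} (h : a ∈ rightIdeal b) : rightIdeal a ⊆ rightIdeal b := by
  intro t ht
  rcases ht with ht | ⟨y, ht⟩
  · rcases h with h | ⟨x, h⟩
    · exact Or.inl (ht.trans h)
    · exact Or.inr ⟨x, ht.trans h⟩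
  · rcases h with h | ⟨x, h⟩
    · exact Or.inr ⟨y, ht.trans (mul_le_mul_left h y)⟩
    · exact Or.inr ⟨x * y, ht.trans (by
        calc a * y ≤ b * x * y := mul_le_mul_left h y
          _ = b * (x * y) := mul_assoc _ _ _)⟩

lemma key_mem
    (hcond : ∀ e a : S, e ≤ e * e →
      (∃ x, a * e ≤ e * x * a) ∧ (∃ y, e * a ≤ a * y * e))
    (e f : S) (he : e ≤ e * e) (hf : f ≤ f * f) (h : e ∈ twoIdeal f) :
    e ∈ leftIdeal f ∧ e ∈ rightIdeal f := by
  rcases h with h | ⟨x, h⟩ | ⟨y, h⟩ | ⟨x, y, h⟩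
  · exact ⟨Or.inl h, Or.inl h⟩
  · -- e ≤ x * f
    constructor
    · exact Or.inr ⟨x, h⟩
    · obtain ⟨x', hx'⟩ := (hcond f (e * x) hf).1
      refine Or.inr ⟨x' * (e * x), ?_⟩
      calc e ≤ e * e := he
        _ ≤ e * (x * f) := mul_le_mul_right h e
        _ = e * x * f := (mul_assoc _ _ _).symm
        _ ≤ f * x' * (e * x) := hx'
        _ = f * (x' * (e * x)) := mul_assoc _ _ _
  · -- e ≤ f * y
    constructor
    · obtain ⟨y', hy'⟩ := (hcond f (y * e) hf).2
      refine Or.inr ⟨y * e * y', ?_⟩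
      calc e ≤ e * e := he
        _ ≤ f * y * e := mul_le_mul_left h e
        _ = f * (y * e) := mul_assoc _ _ _
        _ ≤ y * e * y' * f := hy'
    · exact Or.inr ⟨y, h⟩
  · -- e ≤ x * f * y
    constructor
    · obtain ⟨y', hy'⟩ := (hcond f (y * e) hf).2
      refine Or.inr ⟨x * (y * e * y'), ?_⟩
      calc e ≤ e * e := he
        _ ≤ x * f * y * e := mul_le_mul_left h e
        _ = x * (f * (y * e)) := by simp [mul_assoc]
        _ ≤ x * (y * e * y' * f) := mul_le_mul_right hy' x
        _ = x * (y * e * y') * f := by simp [mul_assoc]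
    · obtain ⟨x', hx'⟩ := (hcond f (e * x) hf).1
      refine Or.inr ⟨x' * (e * x) * y, ?_⟩
      calc e ≤ e * e := he
        _ ≤ e * (x * f * y) := mul_le_mul_right h e
        _ = e * x * f * y := by simp [mul_assoc]
        _ ≤ f * x' * (e * x) * y := mul_le_mul_left hx' y
        _ = f * (x' * (e * x) * y) := by simp [mul_assoc]

theorem stmt15
    (hreg : ∀ a : S, ∃ x, a ≤ a * x * a)
    (hcond : ∀ e a : S, e ≤ e * e →
      (∃ x, a * e ≤ e * x * a) ∧ (∃ y, e * a ≤ a * y * e))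
    (e f : S) (he : e ≤ e * e) (hf : f ≤ f * f) (hJ : GreenJ e f) :
    GreenH e f := by
  have hef : e ∈ twoIdeal f := hJ ▸ (Or.inl le_rfl)
  have hfe : f ∈ twoIdeal e := hJ.symm ▸ (Or.inl le_rfl)
  obtain ⟨hL1, hR1⟩ := key_mem hcond e f he hf hef
  obtain ⟨hL2, hR2⟩ := key_mem hcond f e hf he hfe
  exact ⟨Set.Subset.antisymm (left_subset' hL1) (left_subset' hL2),
    Set.Subset.antisymm (right_subset' hR1) (right_subset' hR2)⟩
end

section
/- Let S be a regular ordered semigroup in which H = L = R = J (all Green's relations coincide). Then S is completely regular (a ≤ a²pa² for some p, for each a) and inverse (any two inverses of each element are H-related). -/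
variable {S : Type*} [Semigroup S] [PartialOrder S]
  [CovariantClass S S (· * ·) (· ≤ ·)]
  [CovariantClass S S (Function.swap (· * ·)) (· ≤ ·)]

/-- The two-sided principal ideal is downward closed. -/
lemma twoIdeal_down {b t t' : S} (h : t ≤ t') (h' : t' ∈ twoIdeal b) : t ∈ twoIdeal b := by
  rcases h' with h1 | ⟨x, h1⟩ | ⟨y, h1⟩ | ⟨x, y, h1⟩
  · exact Or.inl (h.trans h1)
  · exact Or.inr (Or.inl ⟨x, h.trans h1⟩)
  · exact Or.inr (Or.inr (Or.inl ⟨y, h.trans h1⟩))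
  · exact Or.inr (Or.inr (Or.inr ⟨x, y, h.trans h1⟩))

lemma twoIdeal_mul_left {b t : S} (x : S) (h : t ∈ twoIdeal b) : x * t ∈ twoIdeal b := by
  rcases h with h1 | ⟨u, h1⟩ | ⟨v, h1⟩ | ⟨u, v, h1⟩
  · exact Or.inr (Or.inl ⟨x, mul_le_mul_right h1 x⟩)
  · exact Or.inr (Or.inl ⟨x * u, by
      calc x * t ≤ x * (u * b) := mul_le_mul_right h1 x
      _ = x * u * b := by rw [mul_assoc]⟩)
  · exact Or.inr (Or.inr (Or.inr ⟨x, v, by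
      calc x * t ≤ x * (b * v) := mul_le_mul_right h1 x
      _ = x * b * v := by rw [mul_assoc]⟩))
  · exact Or.inr (Or.inr (Or.inr ⟨x * u, v, by
      calc x * t ≤ x * (u * b * v) := mul_le_mul_right h1 x
      _ = x * u * b * v := by simp [mul_assoc]⟩))

lemma twoIdeal_mul_right {b t : S} (y : S) (h : t ∈ twoIdeal b) : t * y ∈ twoIdeal b := by
  rcases h with h1 | ⟨u, h1⟩ | ⟨v, h1⟩ | ⟨u, v, h1⟩
  · exact Or.inr (Or.inr (Or.inl ⟨y, mul_le_mul_left h1 y⟩))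
  · exact Or.inr (Or.inr (Or.inr ⟨u, y, mul_le_mul_left h1 y⟩))
  · exact Or.inr (Or.inr (Or.inl ⟨v * y, by
      calc t * y ≤ b * v * y := mul_le_mul_left h1 y
      _ = b * (v * y) := by rw [mul_assoc]⟩))
  · exact Or.inr (Or.inr (Or.inr ⟨u, v * y, by
      calc t * y ≤ u * b * v * y := mul_le_mul_left h1 y
      _ = u * b * (v * y) := by rw [mul_assoc]⟩))

/-- If `a ∈ (S¹bS¹]` then `(S¹aS¹] ⊆ (S¹bS¹]`. -/
lemma twoIdeal_subset {a b : S} (h : a ∈ twoIdeal b) : twoIdeal a ⊆ twoIdeal b := by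
  intro t ht
  rcases ht with h1 | ⟨x, h1⟩ | ⟨y, h1⟩ | ⟨x, y, h1⟩
  · exact twoIdeal_down h1 h
  · exact twoIdeal_down h1 (twoIdeal_mul_left x h)
  · exact twoIdeal_down h1 (twoIdeal_mul_right y h)
  · exact twoIdeal_down h1 (twoIdeal_mul_right y (twoIdeal_mul_left x h))

theorem stmt17
    (hreg : ∀ a : S, ∃ x, a ≤ a * x * a)
    (hHL : ∀ a b : S, GreenH a b ↔ GreenL a b)
    (hLR : ∀ a b : S, GreenL a b ↔ GreenR a b)
    (hRJ : ∀ a b : S, GreenR a b ↔ GreenJ a b) :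
    (∀ a : S, ∃ p, a ≤ a * a * p * (a * a)) ∧
    (∀ a b c : S, OrdInv a b → OrdInv a c → GreenH b c) := by
  constructor
  · -- completely regular
    intro a
    obtain ⟨x, hx⟩ := hreg a
    -- a J (a*x) and a J (x*a)
    have hJax : GreenJ (a * x) a := by
      apply Set.Subset.antisymm
      · exact twoIdeal_subset (Or.inr (Or.inr (Or.inl ⟨x, le_refl (a * x)⟩)))
      · exact twoIdeal_subset (Or.inr (Or.inr (Or.inl ⟨a, hx⟩)))
    have hJxa : GreenJ a (x * a) := by
      apply Set.Subset.antisymm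
      · exact twoIdeal_subset (Or.inr (Or.inl ⟨a, (mul_assoc a x a) ▸ hx⟩))
      · exact twoIdeal_subset (Or.inr (Or.inl ⟨x, le_refl (x * a)⟩))
    have hJ : GreenJ (a * x) (x * a) := hJax.trans hJxa
    have hR : GreenR (a * x) (x * a) := (hRJ _ _).mpr hJ
    have hL : GreenL (a * x) (x * a) := (hLR _ _).mpr hR
    -- a*x ∈ leftIdeal (x*a)
    have hmemL : (a * x) ∈ leftIdeal (x * a) := by
      rw [← hL]; exact Or.inl le_rfl
    -- x*a ∈ rightIdeal (a*x)
    have hmemR : (x * a) ∈ rightIdeal (a * x) := by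
      rw [hR]; exact Or.inl le_rfl
    -- left regularity: a ≤ s * (a*a)
    have hleft : ∃ s, a ≤ s * (a * a) := by
      rcases hmemL with h1 | ⟨w, h1⟩
      · refine ⟨x, ?_⟩
        calc a ≤ a * x * a := hx
        _ ≤ x * a * a := mul_le_mul_left h1 a
        _ = x * (a * a) := by rw [mul_assoc]
      · refine ⟨w * x, ?_⟩
        calc a ≤ a * x * a := hx
        _ ≤ w * (x * a) * a := mul_le_mul_left h1 a
        _ = w * x * (a * a) := by simp [mul_assoc]
    -- right regularity: a ≤ (a*a) * t
    have hright : ∃ t, a ≤ (a * a) * t := by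
      rcases hmemR with h1 | ⟨v, h1⟩
      · refine ⟨x, ?_⟩
        calc a ≤ a * (x * a) := (mul_assoc a x a) ▸ hx
        _ ≤ a * (a * x) := mul_le_mul_right h1 a
        _ = a * a * x := by rw [mul_assoc]
      · refine ⟨x * v, ?_⟩
        calc a ≤ a * (x * a) := (mul_assoc a x a) ▸ hx
        _ ≤ a * (a * x * v) := mul_le_mul_right h1 a
        _ = a * a * (x * v) := by simp [mul_assoc]
    obtain ⟨s, hs⟩ := hleft
    obtain ⟨t, ht⟩ := hright
    refine ⟨t * x * s, ?_⟩
    calc a ≤ a * x * a := hx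
    _ ≤ (a * a * t) * x * (s * (a * a)) := mul_le_mul' (mul_le_mul' ht le_rfl) hs
    _ = a * a * (t * x * s) * (a * a) := by simp [mul_assoc]
  · -- inverses are H-related
    intro a b c hb hc
    have hJba : GreenJ b a := by
      apply Set.Subset.antisymm
      · exact twoIdeal_subset (Or.inr (Or.inr (Or.inr ⟨b, b, hb.2⟩)))
      · exact twoIdeal_subset (Or.inr (Or.inr (Or.inr ⟨a, a, hb.1⟩)))
    have hJac : GreenJ a c := by
      apply Set.Subset.antisymm
      · exact twoIdeal_subset (Or.inr (Or.inr (Or.inr ⟨a, a, hc.1⟩)))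
      · exact twoIdeal_subset (Or.inr (Or.inr (Or.inr ⟨c, c, hc.2⟩)))
    have hJ : GreenJ b c := hJba.trans hJac
    have hR : GreenR b c := (hRJ _ _).mpr hJ
    have hL : GreenL b c := (hLR _ _).mpr hR
    exact ⟨hL, hR⟩
end

section
/- Let S be a completely regular ordered semigroup. Then for every a ∈ S there exists y ∈ S such that a ≤ a²ya and a ≤ aya², and both a²y and ya² are ordered idempotents. -/
variable {S : Type*} [Semigroup S] [PartialOrder S]
  [CovariantClass S S (· * ·) (· ≤ ·)]
  [CovariantClass S S (Function.swap (· * ·)) (· ≤ ·)]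

theorem stmt18
    (hcr : ∀ a : S, ∃ x, a ≤ a * a * x * (a * a)) :
    ∀ a : S, ∃ y, a ≤ a * a * y * a ∧ a ≤ a * y * (a * a) ∧
      a * a * y ≤ (a * a * y) * (a * a * y) ∧
      y * (a * a) ≤ (y * (a * a)) * (y * (a * a)) := by
  intro a
  obtain ⟨x, hx⟩ := hcr a
  set y := a * x * (a * a) * x * a with hy
  have g1 : a ≤ a * a * y * a := by
    have h2 : a * a ≤ a * (a * a * x * (a * a)) := mul_le_mul_right hx a
    calc a ≤ a * a * x * (a * a) := hx
      _ = (a * a) * (x * (a * a)) := by simp [mul_assoc]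
      _ ≤ (a * (a * a * x * (a * a))) * (x * (a * a)) := mul_le_mul_left h2 _
      _ = a * a * y * a := by simp [hy, mul_assoc]
  have g2 : a ≤ a * y * (a * a) := by
    have h3 : a * a ≤ (a * a * x * (a * a)) * a := mul_le_mul_left hx a
    calc a ≤ a * a * x * (a * a) := hx
      _ ≤ (a * a * x) * ((a * a * x * (a * a)) * a) := mul_le_mul_right h3 _
      _ = a * y * (a * a) := by simp [hy, mul_assoc]
  refine ⟨y, g1, g2, ?_, ?_⟩
  · have h := mul_le_mul_left (mul_le_mul_left g1 a) y
    exact le_trans (le_of_eq (by simp [mul_assoc])) (le_trans h (le_of_eq (by simp [mul_assoc])))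
  · have h := mul_le_mul_right (mul_le_mul_right g2 a) y
    exact le_trans (le_of_eq (by simp [mul_assoc])) (le_trans h (le_of_eq (by simp [mul_assoc])))
end

section
/- Let S be an ordered semigroup, e, f ordered idempotents, and x ∈ V_≤(ef). Then fxe is an ordered idempotent and ef ∈ V_≤(fxe), i.e., fxe ≤ (fxe)(ef)(fxe) and ef ≤ (ef)(fxe)(ef). -/
variable {S : Type*} [Semigroup S] [PartialOrder S]
  [CovariantClass S S (· * ·) (· ≤ ·)]
  [CovariantClass S S (Function.swap (· * ·)) (· ≤ ·)]

theorem stmt19 (e f x : S) (he : e ≤ e * e) (hf : f ≤ f * f)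
    (hx : OrdInv (e * f) x) :
    f * x * e ≤ (f * x * e) * (f * x * e) ∧ OrdInv (f * x * e) (e * f) := by
  obtain ⟨hef, hxx⟩ := hx
  have h1 : f * x * e ≤ (f * x * e) * (f * x * e) := by
    calc f * x * e ≤ f * (x * (e * f) * x) * e := by
          exact mul_le_mul' (mul_le_mul' le_rfl hxx) le_rfl
      _ = (f * x * e) * (f * x * e) := by
          simp only [mul_assoc]
  refine ⟨h1, ?_, ?_⟩
  · calc f * x * e ≤ (f * x * e) * (f * x * e) := h1
      _ ≤ (f * x * (e * e)) * ((f * f) * x * e) := by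
          exact mul_le_mul' (mul_le_mul' le_rfl he) (mul_le_mul' (mul_le_mul' hf le_rfl) le_rfl)
      _ = (f * x * e) * (e * f) * (f * x * e) := by
          simp only [mul_assoc]
  · calc e * f ≤ (e * f) * x * (e * f) := hef
      _ ≤ (e * (f * f)) * x * ((e * e) * f) := by
          exact mul_le_mul' (mul_le_mul' (mul_le_mul' le_rfl hf) le_rfl) (mul_le_mul' he le_rfl)
      _ = (e * f) * (f * x * e) * (e * f) := by
          simp only [mul_assoc]
end
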